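/- Let f : [0,1] → 2^[0,1] be upper semicontinuous with connected graph G(f). Then f has the Weak Intermediate Value Property if and only if for all 0 ≤ a ≤ b ≤ 1, every connected component of G(f) ∩ ([a,b] × [0,1]) intersects both {a} × [0,1] and {b} × [0,1]. -/

import Mathlib

open Set

/-- Graph of a set-valued function on [0,1]. -/
def SVGraph (f : ℝ → Set ℝ) : Set (ℝ × ℝ) :=
  {p | p.1 ∈ Icc (0:ℝ) 1 ∧ p.2 ∈ f p.1}

/-- f has nonempty compact values contained in [0,1]. -/
def SV (f : ℝ → Set ℝ) : Prop :=
  ∀ x ∈ Icc (0:ℝ) 1, (f x).Nonempty ∧ IsCompact (f x) ∧ f x ⊆ Icc (0:ℝ) 1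

/-- Upper semicontinuity on [0,1]. -/
def USC (f : ℝ → Set ℝ) : Prop :=
  ∀ x ∈ Icc (0:ℝ) 1, ∀ U : Set ℝ, IsOpen U → f x ⊆ U →
    ∃ V : Set ℝ, IsOpen V ∧ x ∈ V ∧ ∀ v ∈ V ∩ Icc (0:ℝ) 1, f v ⊆ U

/-- Weak Intermediate Value Property. -/
def WIVP (f : ℝ → Set ℝ) : Prop :=
  ∀ x₁ ∈ Icc (0:ℝ) 1, ∀ x₂ ∈ Icc (0:ℝ) 1, x₁ ≠ x₂ → ∀ y₁ ∈ f x₁,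
    ∃ y₂ ∈ f x₂, ∀ y ∈ uIcc y₁ y₂, ∃ x ∈ uIcc x₁ x₂, y ∈ f x

/-- Intermediate Value Property. -/
def IVP (f : ℝ → Set ℝ) : Prop :=
  ∀ x₁ ∈ Icc (0:ℝ) 1, ∀ x₂ ∈ Icc (0:ℝ) 1, x₁ ≠ x₂ → ∀ y₁ ∈ f x₁, ∀ y₂ ∈ f x₂, y₁ ≠ y₂ →
    ∀ y ∈ Ioo (min y₁ y₂) (max y₁ y₂), ∃ x ∈ Ioo (min x₁ x₂) (max x₁ x₂), y ∈ f x

/-! Let `K = G(f) ∩ [a,b] × [0,1]`, a compact set since the graph is closed. If the component of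
`p` in `K` missed the line `x = c`, `K` would split into disjoint compact pieces `U ∋ p` and `V`
with `U` missing that line. The pieces are some `δ > 0` apart, and the WIVP applied at a point of
`U` towards any abscissa closer than `δ` yields a vertical interval of heights, all realised in a
strip of width `< δ`; such an interval cannot pass from `U` to `V`, so its endpoint lies in `U`.
Thus the projection of `U` to the `x`-axis contains the `δ`-neighbourhood in `[a,b]` of each of
its points, and `[a,b]` being connected, it is all of `[a,b]`, a contradiction.
Conversely, the component of `(x₁, y₁)` in `G(f) ∩ [x₁,x₂] × [0,1]` reaches `x = x₂` at some
`(x₂, y₂)`, and its projection to the `y`-axis is an interval containing `y₁` and `y₂`. -/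

open Metric

theorem isClosed_svGraph {f : ℝ → Set ℝ} (hclosed : ∀ x ∈ Icc (0:ℝ) 1, IsClosed (f x))
    (husc : USC f) : IsClosed (SVGraph f) := by
  refine isOpen_compl_iff.mp (isOpen_iff_mem_nhds.mpr ?_)
  rintro ⟨x, y⟩ hxy
  by_cases hx : x ∈ Icc (0:ℝ) 1
  · obtain ⟨O, W, hO, hW, hyO, hfW, hOW⟩ := SeparatedNhds.of_isCompact_isClosed
      isCompact_singleton (hclosed x hx) (disjoint_singleton_left.mpr fun hy => hxy ⟨hx, hy⟩)
    obtain ⟨V, hV, hxV, hVW⟩ := husc x hx W hW hfW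
    filter_upwards [prod_mem_nhds (hV.mem_nhds hxV) (hO.mem_nhds (hyO rfl))]
    rintro ⟨v, w⟩ ⟨hv, hw⟩ ⟨hv01, hwf⟩
    exact hOW.ne_of_mem hw (hVW v ⟨hv, hv01⟩ hwf) rfl
  · filter_upwards [(isClosed_Icc.isOpen_compl.prod isOpen_univ).mem_nhds ⟨hx, trivial⟩]
    rintro _ ⟨hv, -⟩ ⟨hv01, -⟩
    exact hv hv01

theorem exists_isClopen_mem_disjoint_of_disjoint_connectedComponent {X : Type*}
    [TopologicalSpace X] [T2Space X] [CompactSpace X] {x : X} {S : Set X} (hS : IsClosed S)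
    (h : Disjoint (connectedComponent x) S) : ∃ U, IsClopen U ∧ x ∈ U ∧ Disjoint U S := by
  rw [connectedComponent_eq_iInter_isClopen, disjoint_iff_inter_eq_empty, inter_comm] at h
  obtain ⟨t, ht⟩ := hS.isCompact.elim_finite_subfamily_closed _ (fun s => s.2.1.1) h
  refine ⟨⋂ s ∈ t, s.1, isClopen_biInter_finset fun s _ => s.2.1,
    mem_iInter₂.2 fun s _ => s.2.2, ?_⟩
  rwa [disjoint_iff_inter_eq_empty, inter_comm]

theorem IsCompact.exists_split_of_disjoint_connectedComponentIn {X : Type*} [TopologicalSpace X]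
    [T2Space X] {K S : Set X} (hK : IsCompact K) (hS : IsClosed S) {p : X} (hp : p ∈ K)
    (h : Disjoint (connectedComponentIn K p) S) :
    ∃ U V, IsCompact U ∧ IsCompact V ∧ Disjoint U V ∧ K = U ∪ V ∧ p ∈ U ∧ Disjoint U S := by
  have := isCompact_iff_compactSpace.mp hK
  rw [connectedComponentIn_eq_image hp, disjoint_image_left] at h
  obtain ⟨U, hU, hpU, hUS⟩ :=
    exists_isClopen_mem_disjoint_of_disjoint_connectedComponent
      (hS.preimage continuous_subtype_val) h
  refine ⟨(↑) '' U, (↑) '' Uᶜ, hU.isClosed.isCompact.image continuous_subtype_val,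
    hU.isOpen.isClosed_compl.isCompact.image continuous_subtype_val,
    (disjoint_image_iff Subtype.val_injective).mpr disjoint_compl_right, ?_, ⟨_, hpU, rfl⟩,
    disjoint_image_left.mpr hUS⟩
  rw [← image_union, union_compl_self, image_univ, Subtype.range_coe]

theorem IsPreconnected.subset_of_forall_dist_lt {α : Type*} [PseudoMetricSpace α] {s T : Set α}
    {δ : ℝ} (hs : IsPreconnected s) (hδ : 0 < δ) (hsT : (s ∩ T).Nonempty)
    (hT : ∀ t ∈ T, ∀ x ∈ s, dist x t < δ → x ∈ T) : s ⊆ T := by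
  intro x hx
  by_contra hxT
  have hcover : s ⊆ thickening δ T ∪ thickening δ (s \ T) := fun z hz => by
    by_cases hzT : z ∈ T
    exacts [Or.inl (self_subset_thickening hδ _ hzT),
      Or.inr (self_subset_thickening hδ _ ⟨hz, hzT⟩)]
  obtain ⟨z, hzs, hzT, hzsT⟩ := hs _ _ isOpen_thickening isOpen_thickening hcover
    (hsT.mono (inter_subset_inter_right _ (self_subset_thickening hδ _)))
    ⟨x, hx, self_subset_thickening hδ _ ⟨hx, hxT⟩⟩
  obtain ⟨t, ht, hzt⟩ := mem_thickening_iff.mp hzT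
  obtain ⟨w, ⟨hws, hwT⟩, hzw⟩ := mem_thickening_iff.mp hzsT
  exact hwT (hT z (hT t ht z hzs hzt) w hws (by rwa [dist_comm]))

theorem mem_of_forall_mem_strip {K U V : Set (ℝ × ℝ)} (hU : IsCompact U) (hV : IsCompact V)
    (hK : K ⊆ U ∪ V) {δ : ℝ} (hUV : Disjoint (thickening δ U) V) {q : ℝ × ℝ} (hq : q ∈ U)
    {x y : ℝ} (hx : dist q.1 x < δ)
    (hstrip : ∀ y' ∈ uIcc q.2 y, ∃ x' ∈ uIcc q.1 x, (x', y') ∈ K) (hxy : (x, y) ∈ K) :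
    (x, y) ∈ U := by
  have hnear : ∀ x' ∈ uIcc q.1 x, ∀ x'' ∈ uIcc q.1 x, ∀ y', (x', y') ∈ U → (x'', y') ∉ V := by
    intro x' hx' x'' hx'' y' hU' hV'
    refine disjoint_left.mp hUV (mem_thickening_iff.mpr ⟨_, hU', ?_⟩) hV'
    rw [Prod.dist_eq, dist_self, max_eq_left dist_nonneg]
    exact (Real.dist_le_of_mem_uIcc hx'' hx').trans_lt hx
  set A := Prod.snd '' (U ∩ Prod.fst ⁻¹' uIcc q.1 x)
  set B := Prod.snd '' (V ∩ Prod.fst ⁻¹' uIcc q.1 x)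
  have hA : IsClosed A :=
    ((hU.inter_right (isClosed_Icc.preimage continuous_fst)).image continuous_snd).isClosed
  have hB : IsClosed B :=
    ((hV.inter_right (isClosed_Icc.preimage continuous_fst)).image continuous_snd).isClosed
  have hAB : Disjoint A B := by
    refine disjoint_left.mpr ?_
    rintro _ ⟨⟨x', _⟩, ⟨hU', hx'⟩, rfl⟩ ⟨⟨x'', _⟩, ⟨hV', hx''⟩, rfl⟩
    exact hnear x' hx' x'' hx'' _ hU' hV'
  have hcover : uIcc q.2 y ⊆ A ∪ B := by
    intro y' hy'
    obtain ⟨x', hx', hK'⟩ := hstrip y' hy'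
    rcases hK hK' with h | h
    exacts [Or.inl ⟨_, ⟨h, hx'⟩, rfl⟩, Or.inr ⟨_, ⟨h, hx'⟩, rfl⟩]
  have hq2 : q.2 ∈ A := ⟨q, ⟨hq, left_mem_uIcc⟩, rfl⟩
  have hsubA : uIcc q.2 y ⊆ A := by
    rcases isPreconnected_iff_subset_of_disjoint_closed.mp isPreconnected_uIcc A B hA hB hcover
      (by rw [hAB.inter_eq, inter_empty]) with h | h
    · exact h
    · exact absurd (h left_mem_uIcc) (disjoint_left.mp hAB hq2)
  obtain ⟨⟨x', _⟩, ⟨hU', hx'⟩, rfl⟩ := hsubA right_mem_uIcc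
  exact (hK hxy).resolve_right (hnear x' hx' x right_mem_uIcc _ hU')

section

variable {f : ℝ → Set ℝ} {a b : ℝ}

theorem mem_svGraph_inter (hSV : SV f) (ha : 0 ≤ a) (hb : b ≤ 1) {x y : ℝ} (hx : x ∈ Icc a b)
    (hy : y ∈ f x) : (x, y) ∈ SVGraph f ∩ Icc a b ×ˢ Icc (0:ℝ) 1 :=
  have hx01 : x ∈ Icc (0:ℝ) 1 := ⟨ha.trans hx.1, hx.2.trans hb⟩
  ⟨⟨hx01, hy⟩, hx, (hSV x hx01).2.2 hy⟩

theorem Icc_subset_image_fst_of_wivp (hSV : SV f) (hW : WIVP f) (ha : 0 ≤ a) (hb : b ≤ 1)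
    {U V : Set (ℝ × ℝ)} (hU : IsCompact U) (hV : IsCompact V) (hUV : Disjoint U V)
    (hcover : SVGraph f ∩ Icc a b ×ˢ Icc (0:ℝ) 1 = U ∪ V) (hne : U.Nonempty) :
    Icc a b ⊆ Prod.fst '' U := by
  obtain ⟨δ, hδ, hsep⟩ := hUV.exists_thickenings hU hV.isClosed
  have hUab : ∀ q ∈ U, q.1 ∈ Icc a b := fun q hq => (hcover.symm.subset (Or.inl hq)).2.1
  refine isPreconnected_Icc.subset_of_forall_dist_lt hδ ?_ ?_
  · obtain ⟨q, hq⟩ := hne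
    exact ⟨q.1, hUab q hq, q, hq, rfl⟩
  rintro _ ⟨q, hq, rfl⟩ x hx hqx
  obtain hqx' | hqx' := eq_or_ne q.1 x
  · exact ⟨q, hq, hqx'⟩
  have hstrip : uIcc q.1 x ⊆ Icc a b := uIcc_subset_Icc (hUab q hq) hx
  have hK : ∀ x' ∈ uIcc q.1 x, ∀ y' ∈ f x', (x', y') ∈ SVGraph f ∩ Icc a b ×ˢ Icc (0:ℝ) 1 :=
    fun x' hx' y' hy' => mem_svGraph_inter hSV ha hb (hstrip hx') hy'
  have hqK := hcover.symm.subset (Or.inl hq)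
  obtain ⟨y, hy, hWy⟩ := hW q.1 hqK.1.1 x ⟨ha.trans hx.1, hx.2.trans hb⟩ hqx' q.2 hqK.1.2
  refine ⟨(x, y), mem_of_forall_mem_strip hU hV hcover.subset
    (hsep.mono_right (self_subset_thickening hδ V)) hq (by rwa [dist_comm]) (fun y' hy' => ?_)
    (hK x right_mem_uIcc y hy), rfl⟩
  obtain ⟨x', hx', hy'⟩ := hWy y' hy'
  exact ⟨x', hx', hK x' hx' y' hy'⟩

theorem connectedComponentIn_inter_fst_eq_nonempty (hSV : SV f) (husc : USC f) (hW : WIVP f)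
    (ha : 0 ≤ a) (hb : b ≤ 1) {p : ℝ × ℝ} (hp : p ∈ SVGraph f ∩ Icc a b ×ˢ Icc (0:ℝ) 1)
    {c : ℝ} (hc : c ∈ Icc a b) :
    (connectedComponentIn (SVGraph f ∩ Icc a b ×ˢ Icc (0:ℝ) 1) p ∩ {q | q.1 = c}).Nonempty := by
  have hK : IsCompact (SVGraph f ∩ Icc a b ×ˢ Icc (0:ℝ) 1) :=
    (isCompact_Icc.prod isCompact_Icc).inter_left
      (isClosed_svGraph (fun x hx => (hSV x hx).2.1.isClosed) husc)
  by_contra h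
  obtain ⟨U, V, hU, hV, hUV, hcover, hpU, hUc⟩ :=
    hK.exists_split_of_disjoint_connectedComponentIn (isClosed_eq continuous_fst continuous_const)
      hp (disjoint_iff_inter_eq_empty.mpr (not_nonempty_iff_eq_empty.mp h))
  obtain ⟨q, hq, rfl⟩ := Icc_subset_image_fst_of_wivp hSV hW ha hb hU hV hUV hcover ⟨p, hpU⟩ hc
  exact disjoint_left.mp hUc hq rfl

theorem exists_wivp_witness_of_isPreconnected {C : Set (ℝ × ℝ)} (hC : IsPreconnected C)
    (hCf : C ⊆ SVGraph f) {x₁ x₂ y₁ : ℝ} (hCx : C ⊆ uIcc x₁ x₂ ×ˢ univ) (h₁ : (x₁, y₁) ∈ C)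
    {q : ℝ × ℝ} (hq : q ∈ C) (hq₂ : q.1 = x₂) :
    ∃ y₂ ∈ f x₂, ∀ y ∈ uIcc y₁ y₂, ∃ x ∈ uIcc x₁ x₂, y ∈ f x := by
  refine ⟨q.2, hq₂ ▸ (hCf hq).2, fun y hy => ?_⟩
  obtain ⟨r, hr, rfl⟩ := (hC.image _ continuous_snd.continuousOn).ordConnected.uIcc_subset
    ⟨_, h₁, rfl⟩ ⟨q, hq, rfl⟩ hy
  exact ⟨r.1, (hCx hr).1, (hCf hr).2⟩

theorem wivp_of_forall_connectedComponentIn (hSV : SV f)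
    (h : ∀ a b : ℝ, 0 ≤ a → a ≤ b → b ≤ 1 →
      ∀ p ∈ SVGraph f ∩ Icc a b ×ˢ Icc (0:ℝ) 1,
        (connectedComponentIn (SVGraph f ∩ Icc a b ×ˢ Icc (0:ℝ) 1) p ∩
          {q : ℝ × ℝ | q.1 = a}).Nonempty ∧
        (connectedComponentIn (SVGraph f ∩ Icc a b ×ˢ Icc (0:ℝ) 1) p ∩
          {q : ℝ × ℝ | q.1 = b}).Nonempty) :
    WIVP f := by
  intro x₁ hx₁ x₂ hx₂ _ y₁ hy₁
  have h0 : 0 ≤ min x₁ x₂ := le_min hx₁.1 hx₂.1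
  have h1 : max x₁ x₂ ≤ 1 := max_le hx₁.2 hx₂.2
  have hp := mem_svGraph_inter hSV h0 h1 left_mem_uIcc hy₁
  obtain ⟨hmin, hmax⟩ := h _ _ h0 min_le_max h1 _ hp
  have hx₂C : ∃ q ∈ connectedComponentIn (SVGraph f ∩ uIcc x₁ x₂ ×ˢ Icc (0:ℝ) 1) (x₁, y₁),
      q.1 = x₂ := by
    rcases le_total x₁ x₂ with hle | hle
    · obtain ⟨q, hq, hq₂⟩ := hmax
      exact ⟨q, hq, hq₂.trans (max_eq_right hle)⟩
    · obtain ⟨q, hq, hq₂⟩ := hmin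
      exact ⟨q, hq, hq₂.trans (min_eq_right hle)⟩
  obtain ⟨q, hq, hq₂⟩ := hx₂C
  have hCK := connectedComponentIn_subset (SVGraph f ∩ uIcc x₁ x₂ ×ˢ Icc (0:ℝ) 1) (x₁, y₁)
  exact exists_wivp_witness_of_isPreconnected isPreconnected_connectedComponentIn
    (fun r hr => (hCK hr).1) (fun r hr => ⟨(hCK hr).2.1, trivial⟩) (mem_connectedComponentIn hp)
    hq hq₂

end

theorem stmt2 (f : ℝ → Set ℝ) (hSV : SV f) (husc : USC f) :
    WIVP f ↔
      ∀ a b : ℝ, 0 ≤ a → a ≤ b → b ≤ 1 →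
        ∀ p ∈ SVGraph f ∩ Icc a b ×ˢ Icc (0:ℝ) 1,
          (connectedComponentIn (SVGraph f ∩ Icc a b ×ˢ Icc (0:ℝ) 1) p ∩
            {q : ℝ × ℝ | q.1 = a}).Nonempty ∧
          (connectedComponentIn (SVGraph f ∩ Icc a b ×ˢ Icc (0:ℝ) 1) p ∩
            {q : ℝ × ℝ | q.1 = b}).Nonempty := by
  refine ⟨fun hW a b ha hab hb p hp => ⟨?_, ?_⟩, wivp_of_forall_connectedComponentIn hSV⟩
  · exact connectedComponentIn_inter_fst_eq_nonempty hSV husc hW ha hb hp (left_mem_Icc.mpr hab)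
  · exact connectedComponentIn_inter_fst_eq_nonempty hSV husc hW ha hb hp (right_mem_Icc.mpr hab)
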